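/- arXiv:2207.07505 — 2 statements merged into one kernel-verified Lean document; each statement's English description precedes it below -/
import Mathlib

section
/- For ordinals α and γ: α ◁ γ (formal membership, meaning α ∈ L_γ) holds if and only if 2^α ⊑ γ, where ⊑ is formal inclusion. -/
open Ordinal

/-- `Lset a` is the (finite) set of exponents appearing in the base-2
Cantor normal form of the ordinal `a`. -/
noncomputable def Lset (a : Ordinal) : Finset Ordinal :=
  ((Ordinal.CNF 2 a).map Prod.fst).toFinset

/-- Formal inclusion of ordinals: containment of base-2 exponent sets. -/
def fincl (a b : Ordinal) : Prop := Lset a ⊆ Lset b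

theorem Lset_two_opow (α : Ordinal) : Lset ((2 : Ordinal) ^ α) = {α} := by
  have h2 : (1 : Ordinal) < 2 := one_lt_two
  have hne : (2 : Ordinal) ^ α ≠ 0 := (opow_pos α (zero_lt_two)).ne'
  have hlog : Ordinal.log 2 ((2 : Ordinal) ^ α) = α := Ordinal.log_opow h2 α
  have hdiv : (2 : Ordinal) ^ α / (2 : Ordinal) ^ α = 1 := Ordinal.div_self hne
  have hmod : (2 : Ordinal) ^ α % (2 : Ordinal) ^ α = 0 := Ordinal.mod_self _
  rw [Lset, Ordinal.CNF.ne_zero hne, hlog, hdiv, hmod, Ordinal.CNF.zero_right]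
  simp

theorem formal_mem_iff (α γ : Ordinal) :
    α ∈ Lset γ ↔ fincl ((2 : Ordinal) ^ α) γ := by
  rw [fincl, Lset_two_opow, Finset.singleton_subset_iff]
end

section
/- For ordinals α, β, γ: both α ◁ γ and β ◁ γ hold if and only if 2^α ⊕ 2^β ⊑ γ (when α ≠ β), where ⊕ is the natural sum and ⊑ is formal inclusion. -/
open Ordinal

namespace Ordinal
universe u
/-- Natural (Hessenberg) sum of ordinals, as defined in the older Mathlib (`Ordinal.nadd`),
which has since been removed from Mathlib. -/
noncomputable def nadd : Ordinal.{u} → Ordinal.{u} → Ordinal.{u}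
  | a, b => max (⨆ x : Set.Iio a, Order.succ (nadd x.1 b)) (⨆ x : Set.Iio b, Order.succ (nadd a x.1))
termination_by a b => (a, b)
decreasing_by all_goals cases x; decreasing_tactic
end Ordinal

namespace NaturalOps
scoped infixl:65 " ♯ " => Ordinal.nadd
end NaturalOps

open NaturalOps

namespace Ordinal
universe v

theorem nadd_def' (a b : Ordinal.{v}) : a ♯ b =
    max (⨆ x : Set.Iio a, Order.succ (x.1 ♯ b)) (⨆ x : Set.Iio b, Order.succ (a ♯ x.1)) := by
  rw [nadd]

theorem nadd_le_iff {a b c : Ordinal.{v}} :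
    a ♯ b ≤ c ↔ (∀ a' < a, a' ♯ b < c) ∧ ∀ b' < b, a ♯ b' < c := by
  rw [nadd_def', max_le_iff, Ordinal.iSup_le_iff, Ordinal.iSup_le_iff]
  simp only [Order.succ_le_iff, Subtype.forall, Set.mem_Iio]

theorem lt_nadd_iff {a b c : Ordinal.{v}} :
    a < b ♯ c ↔ (∃ b' < b, a ≤ b' ♯ c) ∨ ∃ c' < c, a ≤ b ♯ c' := by
  rw [nadd_def', lt_max_iff, Ordinal.lt_iSup_iff, Ordinal.lt_iSup_iff]
  simp only [Order.lt_succ_iff, Subtype.exists, Set.mem_Iio, exists_prop]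

theorem nadd_lt_nadd_right {b c : Ordinal.{v}} (h : b < c) (a : Ordinal.{v}) : b ♯ a < c ♯ a :=
  lt_nadd_iff.2 (Or.inl ⟨b, h, le_rfl⟩)

theorem nadd_lt_nadd_left {b c : Ordinal.{v}} (h : b < c) (a : Ordinal.{v}) : a ♯ b < a ♯ c :=
  lt_nadd_iff.2 (Or.inr ⟨b, h, le_rfl⟩)

theorem nadd_comm (a b : Ordinal.{v}) : a ♯ b = b ♯ a := by
  induction a using Ordinal.induction generalizing b with
  | _ a IHa =>
  induction b using Ordinal.induction with
  | _ b IHb =>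
  rw [nadd_def' a b, nadd_def' b a, max_comm]
  congr 1
  · congr 1; funext x; rw [IHb x.1 x.2]
  · congr 1; funext x; rw [IHa x.1 x.2 b]

@[simp]
theorem nadd_zero (a : Ordinal.{v}) : a ♯ 0 = a := by
  induction a using Ordinal.induction with
  | _ a IH =>
  apply le_antisymm
  · rw [nadd_le_iff]
    refine ⟨fun a' h => by rw [IH a' h]; exact h, fun b' h => absurd h (by simp)⟩
  · apply le_of_forall_lt
    intro x hx
    have := nadd_lt_nadd_right hx 0
    rwa [IH x hx] at this

@[simp]
theorem zero_nadd (a : Ordinal.{v}) : 0 ♯ a = a := by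
  rw [nadd_comm, nadd_zero]

theorem le_nadd_self_left (a b : Ordinal.{v}) : a ≤ a ♯ b := by
  rcases eq_or_ne b 0 with rfl | hb
  · rw [nadd_zero]
  · have := nadd_lt_nadd_left (pos_iff_ne_zero.2 hb) a
    rw [nadd_zero] at this; exact this.le

theorem add_le_nadd (a b : Ordinal.{v}) : a + b ≤ a ♯ b := by
  induction b using Ordinal.induction with
  | _ b IH =>
  apply le_of_forall_lt
  intro x hx
  rcases lt_or_ge x a with h | h
  · exact h.trans_le (le_nadd_self_left a b)
  · have hx' : x = a + (x - a) := (Ordinal.add_sub_cancel_of_le h).symm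
    have hc : x - a < b := by
      rw [hx'] at hx; exact (add_lt_add_iff_left a).1 hx
    calc x = a + (x - a) := hx'
      _ ≤ a ♯ (x - a) := IH _ hc
      _ < a ♯ b := nadd_lt_nadd_left hc a

end Ordinal

-- decomposition of x < W*s + r
lemma decomp {W x r : Ordinal} (hW : W ≠ 0) {s : ℕ} (hr : r < W) (hx : x < W * s + r) :
    ∃ (s₂ : ℕ) (r₂ : Ordinal), r₂ < W ∧ x = W * s₂ + r₂ ∧
      (s₂ < s ∨ (s₂ = s ∧ r₂ < r)) := by
  have hx' : x < W * (s + 1 : ℕ) := by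
    push_cast
    rw [mul_add, mul_one]
    exact hx.trans (add_lt_add_right hr _)
  have hdiv : x / W < ((s : Ordinal) + 1) := by
    rw [div_lt hW]; push_cast at hx' ⊢; exact hx'
  have hdivω : x / W < Ordinal.omega0 := hdiv.trans_le (by
    have := nat_lt_omega0 (s + 1); push_cast at this ⊢; exact this.le)
  obtain ⟨s₂, hs₂⟩ := lt_omega0.1 hdivω
  have hs₂le : s₂ ≤ s := by
    rw [hs₂] at hdiv
    have : (s₂ : Ordinal) < ((s + 1 : ℕ) : Ordinal) := by push_cast; exact hdiv
    exact Nat.lt_succ_iff.1 (Nat.cast_lt.1 this)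
  refine ⟨s₂, x % W, mod_lt x hW, by rw [← hs₂, div_add_mod], ?_⟩
  rcases lt_or_eq_of_le hs₂le with h | rfl
  · exact Or.inl h
  · refine Or.inr ⟨rfl, ?_⟩
    have hxeq : W * s₂ + x % W = x := by rw [← hs₂, div_add_mod]
    rw [← hxeq] at hx
    exact (add_lt_add_iff_left _).1 hx

lemma m1 {W r u : Ordinal} (hr : r < W) (hu : u < W) : W * r + u < W * W := by
  calc W * r + u < W * r + W := add_lt_add_right hu _
    _ = W * (r + 1) := by rw [mul_add, mul_one]
    _ ≤ W * W := mul_le_mul_right (Order.add_one_le_of_lt hr) _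

lemma measA {W : Ordinal} {n₂ n : ℕ} (h : n₂ < n) {r' u' r u : Ordinal}
    (hr' : r' < W) (hu' : u' < W) :
    W * W * n₂ + W * r' + u' < W * W * n + W * r + u := by
  calc W * W * n₂ + W * r' + u' = W * W * n₂ + (W * r' + u') := add_assoc _ _ _
    _ < W * W * n₂ + W * W := add_lt_add_right (m1 hr' hu') _
    _ = W * W * ((n₂ : Ordinal) + 1) := by rw [mul_add, mul_one]
    _ ≤ W * W * n := by
        apply mul_le_mul_right
        exact_mod_cast Nat.succ_le_of_lt h
    _ ≤ W * W * n + W * r + u := by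
        rw [add_assoc]; exact le_self_add

lemma measB {W : Ordinal} {n : ℕ} {r' r u' u : Ordinal} (h : r' < r) (hu' : u' < W)
    (hu : u < W) :
    W * W * n + W * r' + u' < W * W * n + W * r + u := by
  rw [add_assoc, add_assoc]
  apply add_lt_add_right
  calc W * r' + u' < W * r' + W := add_lt_add_right hu' _
    _ = W * (r' + 1) := by rw [mul_add, mul_one]
    _ ≤ W * r := mul_le_mul_right (Order.add_one_le_of_lt h) _
    _ ≤ W * r + u := le_self_add

lemma measC {W : Ordinal} {n : ℕ} {r u' u : Ordinal} (h : u' < u) :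
    W * W * n + W * r + u' < W * W * n + W * r + u :=
  add_lt_add_right h _

-- value bound
lemma valA {W : Ordinal} {n₂ n : ℕ} (h : n₂ < n) {z : Ordinal} (hz : z < W) {z' : Ordinal} :
    W * n₂ + z < W * n + z' := by
  calc W * n₂ + z < W * n₂ + W := add_lt_add_right hz _
    _ = W * ((n₂ : Ordinal) + 1) := by rw [mul_add, mul_one]
    _ ≤ W * n := by apply mul_le_mul_right; exact_mod_cast Nat.succ_le_of_lt h
    _ ≤ W * n + z' := le_self_add

theorem nadd_struct (q : Ordinal) :
    (∀ a < ω ^ q, ∀ b < ω ^ q, a ♯ b < ω ^ q) ∧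
    (∀ (s t : ℕ) (r u : Ordinal), r < ω ^ q → u < ω ^ q →
      (ω ^ q * s + r) ♯ (ω ^ q * t + u) = ω ^ q * ((s + t : ℕ)) + (r ♯ u)) := by
  induction q using Ordinal.induction with
  | _ q IH =>
  have hW0 : (ω ^ q : Ordinal) ≠ 0 := opow_ne_zero _ omega0_ne_zero
  have hP : ∀ a < ω ^ q, ∀ b < ω ^ q, a ♯ b < ω ^ q := by
    intro a ha b hb
    rcases eq_or_ne a 0 with rfl | ha0
    · simpa using hb
    rcases eq_or_ne b 0 with rfl | hb0
    · simpa using ha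
    have hq₂ : max (log ω a) (log ω b) < q :=
      max_lt ((lt_opow_iff_log_lt one_lt_omega0 ha0).1 ha)
        ((lt_opow_iff_log_lt one_lt_omega0 hb0).1 hb)
    set q₂ := max (log ω a) (log ω b) with hq₂def
    have hW₂0 : (ω ^ q₂ : Ordinal) ≠ 0 := opow_ne_zero _ omega0_ne_zero
    have haw : a < ω ^ q₂ * ω := by
      calc a < ω ^ Order.succ (log ω a) := lt_opow_succ_log_self one_lt_omega0 a
        _ ≤ ω ^ Order.succ q₂ :=
            opow_le_opow_right omega0_pos (Order.succ_le_succ (le_max_left _ _))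
        _ = ω ^ q₂ * ω := opow_succ ω q₂
    have hbw : b < ω ^ q₂ * ω := by
      calc b < ω ^ Order.succ (log ω b) := lt_opow_succ_log_self one_lt_omega0 b
        _ ≤ ω ^ Order.succ q₂ :=
            opow_le_opow_right omega0_pos (Order.succ_le_succ (le_max_right _ _))
        _ = ω ^ q₂ * ω := opow_succ ω q₂
    obtain ⟨s, hs⟩ := lt_omega0.1 ((div_lt hW₂0).2 haw)
    obtain ⟨t, ht⟩ := lt_omega0.1 ((div_lt hW₂0).2 hbw)
    have ha' : a = ω ^ q₂ * s + a % ω ^ q₂ := by rw [← hs, div_add_mod]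
    have hb' : b = ω ^ q₂ * t + b % ω ^ q₂ := by rw [← ht, div_add_mod]
    have hra : a % ω ^ q₂ < ω ^ q₂ := mod_lt a hW₂0
    have hrb : b % ω ^ q₂ < ω ^ q₂ := mod_lt b hW₂0
    rw [ha', hb', (IH q₂ hq₂).2 s t _ _ hra hrb]
    calc ω ^ q₂ * ((s + t : ℕ)) + (a % ω ^ q₂ ♯ b % ω ^ q₂)
        < ω ^ q₂ * ((s + t : ℕ)) + ω ^ q₂ :=
          add_lt_add_right ((IH q₂ hq₂).1 _ hra _ hrb) _
      _ = ω ^ q₂ * (((s + t : ℕ) : Ordinal) + 1) := by rw [mul_add, mul_one]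
      _ < ω ^ q₂ * ω := by
          refine mul_lt_mul_of_pos_left ?_ (opow_pos _ omega0_pos)
          exact_mod_cast nat_lt_omega0 (s + t + 1)
      _ = ω ^ Order.succ q₂ := (opow_succ ω q₂).symm
      _ ≤ ω ^ q := opow_le_opow_right omega0_pos (Order.succ_le_of_lt hq₂)
  refine ⟨hP, ?_⟩
  suffices hQ : ∀ M : Ordinal, ∀ (s t : ℕ) (r u : Ordinal), r < ω ^ q → u < ω ^ q →
      ω ^ q * ω ^ q * ((s + t : ℕ)) + ω ^ q * r + u ≤ M →
      (ω ^ q * s + r) ♯ (ω ^ q * t + u) = ω ^ q * ((s + t : ℕ)) + (r ♯ u) by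
    intro s t r u hr hu; exact hQ _ s t r u hr hu le_rfl
  intro M
  induction M using Ordinal.induction with
  | _ M IHM =>
  intro s t r u hr hu hM
  have key : ∀ (s' t' : ℕ) (r' u' : Ordinal), r' < ω ^ q → u' < ω ^ q →
      ω ^ q * ω ^ q * ((s' + t' : ℕ)) + ω ^ q * r' + u' <
        ω ^ q * ω ^ q * ((s + t : ℕ)) + ω ^ q * r + u →
      (ω ^ q * s' + r') ♯ (ω ^ q * t' + u') = ω ^ q * ((s' + t' : ℕ)) + (r' ♯ u') := by
    intro s' t' r' u' hr' hu' hlt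
    exact IHM _ (hlt.trans_le hM) s' t' r' u' hr' hu' le_rfl
  apply le_antisymm
  · rw [nadd_le_iff]
    constructor
    · intro x hx
      obtain ⟨s₂, r₂, hr₂, rfl, hcase⟩ := decomp hW0 hr hx
      rcases hcase with hlt | ⟨rfl, hr₂r⟩
      · rw [key s₂ t r₂ u hr₂ hu (measA (by omega) hr₂ hu)]
        exact valA (by omega) (hP _ hr₂ _ hu)
      · rw [key s₂ t r₂ u hr₂ hu (measB hr₂r hu hu)]
        exact add_lt_add_right (nadd_lt_nadd_right hr₂r u) _
    · intro y hy
      obtain ⟨t₂, u₂, hu₂, rfl, hcase⟩ := decomp hW0 hu hy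
      rcases hcase with hlt | ⟨rfl, hu₂u⟩
      · rw [key s t₂ r u₂ hr hu₂ (measA (by omega) hr hu₂)]
        exact valA (by omega) (hP _ hr _ hu₂)
      · rw [key s t₂ r u₂ hr hu₂ (measC hu₂u)]
        exact add_lt_add_right (nadd_lt_nadd_left hu₂u _) _
  · apply le_of_forall_lt
    intro x hx
    rcases lt_or_ge x (ω ^ q * ((s + t : ℕ))) with h | h
    · refine h.trans_le (le_trans ?_ (add_le_nadd _ _))
      calc ω ^ q * ((s + t : ℕ)) = ω ^ q * s + ω ^ q * t := by push_cast; rw [mul_add]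
        _ ≤ ω ^ q * s + (ω ^ q * t + u) := add_le_add_right (le_self_add) _
        _ ≤ ω ^ q * s + (r + (ω ^ q * t + u)) := add_le_add_right (le_add_self) _
        _ = (ω ^ q * s + r) + (ω ^ q * t + u) := by rw [add_assoc]
    · have hxw : x = ω ^ q * ((s + t : ℕ)) + (x - ω ^ q * ((s + t : ℕ))) :=
        (Ordinal.add_sub_cancel_of_le h).symm
      have hw : x - ω ^ q * ((s + t : ℕ)) < r ♯ u := by
        rw [hxw] at hx; exact (add_lt_add_iff_left _).1 hx
      rcases lt_nadd_iff.1 hw with ⟨r', hr', hwle⟩ | ⟨u', hu', hwle⟩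
      · calc x = ω ^ q * ((s + t : ℕ)) + (x - ω ^ q * ((s + t : ℕ))) := hxw
          _ ≤ ω ^ q * ((s + t : ℕ)) + (r' ♯ u) := add_le_add_right hwle _
          _ = (ω ^ q * s + r') ♯ (ω ^ q * t + u) :=
              (key s t r' u (hr'.trans hr) hu (measB hr' hu hu)).symm
          _ < (ω ^ q * s + r) ♯ (ω ^ q * t + u) :=
              nadd_lt_nadd_right (add_lt_add_right hr' _) _
      · calc x = ω ^ q * ((s + t : ℕ)) + (x - ω ^ q * ((s + t : ℕ))) := hxw
          _ ≤ ω ^ q * ((s + t : ℕ)) + (r ♯ u') := add_le_add_right hwle _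
          _ = (ω ^ q * s + r) ♯ (ω ^ q * t + u') :=
              (key s t r u' hr (hu'.trans hu) (measC hu')).symm
          _ < (ω ^ q * s + r) ♯ (ω ^ q * t + u) :=
              nadd_lt_nadd_left (add_lt_add_right hu' _) _

lemma two_opow_decomp (α : Ordinal) :
    ∃ n : ℕ, (2 : Ordinal) ^ α = ω ^ (α / ω) * ((2 ^ n : ℕ) : Ordinal) ∧
      α = ω * (α / ω) + n := by
  obtain ⟨n, hn⟩ := lt_omega0.1 (mod_lt α omega0_ne_zero)
  have hα : α = ω * (α / ω) + n := by rw [← hn, div_add_mod]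
  refine ⟨n, ?_, hα⟩
  have h2ω : (2 : Ordinal) < ω := by exact_mod_cast nat_lt_omega0 2
  conv_lhs => rw [hα]
  rw [opow_add, opow_mul, opow_omega0 one_lt_two h2ω, opow_natCast]
  norm_num

lemma nadd_two_opow {α β : Ordinal} (h : β < α) :
    (2 : Ordinal) ^ α ♯ (2 : Ordinal) ^ β = 2 ^ α + 2 ^ β := by
  obtain ⟨n, hα, hα2⟩ := two_opow_decomp α
  obtain ⟨m, hβ, hβ2⟩ := two_opow_decomp β
  have hq : β / ω ≤ α / ω := by
    by_contra hlt
    push_neg at hlt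
    have : α < β := by
      calc α = ω * (α / ω) + n := hα2
        _ < ω * (α / ω) + ω := add_lt_add_right (nat_lt_omega0 n) _
        _ = ω * (α / ω + 1) := by rw [mul_add, mul_one]
        _ ≤ ω * (β / ω) := mul_le_mul_right (Order.add_one_le_of_lt hlt) _
        _ ≤ ω * (β / ω) + m := le_self_add
        _ = β := hβ2.symm
    exact lt_asymm h this
  rcases lt_or_eq_of_le hq with hqlt | hqeq
  · have hβlt : (2 : Ordinal) ^ β < ω ^ (α / ω) := by
      rw [hβ]
      calc ω ^ (β / ω) * ((2 ^ m : ℕ) : Ordinal) < ω ^ (β / ω) * ω :=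
            mul_lt_mul_of_pos_left (nat_lt_omega0 _) (opow_pos _ omega0_pos)
        _ = ω ^ Order.succ (β / ω) := (opow_succ _ _).symm
        _ ≤ ω ^ (α / ω) := opow_le_opow_right omega0_pos (Order.succ_le_of_lt hqlt)
    have h2 := (nadd_struct (α / ω)).2 (2 ^ n) 0 0 ((2 : Ordinal) ^ β)
      (opow_pos _ omega0_pos) hβlt
    simp only [add_zero, Nat.cast_zero, mul_zero, zero_add, Nat.add_zero, zero_nadd] at h2
    rw [hα, h2]
  · have hnm : (m : Ordinal) < n := by
      have : ω * (β / ω) + m < ω * (α / ω) + n := by rw [← hα2, ← hβ2]; exact h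
      rw [hqeq] at this
      exact (add_lt_add_iff_left _).1 this
    have h2 := (nadd_struct (α / ω)).2 (2 ^ n) (2 ^ m) 0 0
      (opow_pos _ omega0_pos) (opow_pos _ omega0_pos)
    simp only [add_zero, nadd_zero, Nat.cast_add, mul_add] at h2
    rw [hα, hβ, hqeq, h2]

lemma CNF_two_opow (α : Ordinal) : Ordinal.CNF 2 ((2 : Ordinal) ^ α) = [(α, 1)] := by
  have h0 : (2 : Ordinal) ^ α ≠ 0 := (opow_pos α (by norm_num)).ne'
  rw [CNF.ne_zero h0, log_opow one_lt_two α, Ordinal.div_self h0, mod_self, CNF.zero_right]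

lemma CNF_pair {α β : Ordinal} (h : β < α) :
    Ordinal.CNF 2 ((2 : Ordinal) ^ α + 2 ^ β) = [(α, 1), (β, 1)] := by
  have h2 : (1 : Ordinal) < 2 := one_lt_two
  have hβα : (2 : Ordinal) ^ β < 2 ^ α := (opow_lt_opow_iff_right h2).2 h
  have hx0 : (2 : Ordinal) ^ α + 2 ^ β ≠ 0 :=
    ((opow_pos α (by norm_num)).trans_le (le_self_add)).ne'
  have hlog : log 2 ((2 : Ordinal) ^ α + 2 ^ β) = α := by
    have := log_opow_mul_add h2 one_ne_zero hβα
    rwa [mul_one, log_one_right, add_zero] at this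
  have hdiv : ((2 : Ordinal) ^ α + 2 ^ β) / 2 ^ α = 1 := by
    have := mul_add_div 1 ((opow_pos α (show (0:Ordinal) < 2 by norm_num)).ne')
      ((2 : Ordinal) ^ β)
    rwa [mul_one, div_eq_zero_of_lt hβα, add_zero] at this
  have hmod : ((2 : Ordinal) ^ α + 2 ^ β) % 2 ^ α = 2 ^ β := by
    have := mul_add_mod_self ((2 : Ordinal) ^ α) 1 ((2 : Ordinal) ^ β)
    rw [mul_one] at this
    rw [this, mod_eq_of_lt hβα]
  rw [CNF.ne_zero hx0, hlog, hdiv, hmod, CNF_two_opow]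

lemma Lset_nadd {α β : Ordinal} (h : β < α) :
    Lset ((2 : Ordinal) ^ α ♯ (2 : Ordinal) ^ β) = {α, β} := by
  rw [Lset, nadd_two_opow h, CNF_pair h]
  simp

open NaturalOps in
theorem formal_mem_pair_iff (α β γ : Ordinal) (hne : α ≠ β) :
    (α ∈ Lset γ ∧ β ∈ Lset γ) ↔ fincl ((2 : Ordinal) ^ α ♯ (2 : Ordinal) ^ β) γ := by
  have aux : ∀ a b : Ordinal, b < a →
      ((a ∈ Lset γ ∧ b ∈ Lset γ) ↔ fincl ((2 : Ordinal) ^ a ♯ (2 : Ordinal) ^ b) γ) := by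
    intro a b hba
    unfold fincl
    rw [Lset_nadd hba, Finset.insert_subset_iff, Finset.singleton_subset_iff]
  rcases hne.lt_or_gt with hlt | hlt
  · rw [nadd_comm, and_comm]
    exact aux β α hlt
  · exact aux α β hlt
end
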